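/- arXiv:2009.04098 — 3 statements merged into one kernel-verified Lean document; each statement's English description precedes it below -/
import Mathlib

section
/- Let f and g be mixed-monotone functions with decomposition functions f̂ and ĝ respectively, where the composition f ∘ g is defined. Then h := f ∘ g is mixed-monotone, and ĥ(x₁, x₂) := f̂(ĝ(x₁, x₂), ĝ(x₂, x₁)) is a decomposition function of h. -/
/-- The composition of mixed-monotone functions is mixed-monotone,
with decomposition function `ĥ(x₁,x₂) = f̂(ĝ(x₁,x₂), ĝ(x₂,x₁))`. -/
theorem mixed_monotone_comp {a b c : ℕ}
    (f : (Fin b → ℝ) → (Fin c → ℝ)) (g : (Fin a → ℝ) → (Fin b → ℝ))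
    (fhat : (Fin b → ℝ) → (Fin b → ℝ) → (Fin c → ℝ))
    (ghat : (Fin a → ℝ) → (Fin a → ℝ) → (Fin b → ℝ))
    (hfdiag : ∀ x, f x = fhat x x)
    (hfmono : ∀ x₁ x₂ z, x₁ ≤ x₂ → fhat x₁ z ≤ fhat x₂ z)
    (hfanti : ∀ x₁ x₂ z, x₁ ≤ x₂ → fhat z x₂ ≤ fhat z x₁)
    (hgdiag : ∀ x, g x = ghat x x)
    (hgmono : ∀ x₁ x₂ z, x₁ ≤ x₂ → ghat x₁ z ≤ ghat x₂ z)
    (hganti : ∀ x₁ x₂ z, x₁ ≤ x₂ → ghat z x₂ ≤ ghat z x₁) :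
    (∀ x, (f ∘ g) x = (fun x₁ x₂ => fhat (ghat x₁ x₂) (ghat x₂ x₁)) x x) ∧
    (∀ x₁ x₂ z, x₁ ≤ x₂ →
      (fun y₁ y₂ => fhat (ghat y₁ y₂) (ghat y₂ y₁)) x₁ z ≤
      (fun y₁ y₂ => fhat (ghat y₁ y₂) (ghat y₂ y₁)) x₂ z) ∧
    (∀ x₁ x₂ z, x₁ ≤ x₂ →
      (fun y₁ y₂ => fhat (ghat y₁ y₂) (ghat y₂ y₁)) z x₂ ≤
      (fun y₁ y₂ => fhat (ghat y₁ y₂) (ghat y₂ y₁)) z x₁) := by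
  refine ⟨fun x => ?_, fun x₁ x₂ z h => ?_, fun x₁ x₂ z h => ?_⟩
  · simp [Function.comp, hfdiag, hgdiag]
  · exact le_trans (hfmono _ _ _ (hgmono _ _ _ h)) (hfanti _ _ _ (hganti _ _ _ h))
  · exact le_trans (hfmono _ _ _ (hganti _ _ _ h)) (hfanti _ _ _ (hgmono _ _ _ h))
end

section
/- Under the Lyapunov hypotheses above, for the perturbation analysis one has the key difference estimate: for all x with |x| ≥ r₀, V(F(x) + pδ(x)) − V(x) ≤ (−c₄ + p·a(p))|x|² + p·b(p)|x| + p·c(p), where a(p) = c₃(2L₁L_F + pL₁²), b(p) = 2c₃L₂(pL₁ + L_F), and c(p) = c₃ p L₂². -/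
/-- Key difference estimate in the perturbation analysis:
for `‖x‖ ≥ r₀`,
`V(F x + p δ x) − V x ≤ (−c₄ + p a(p))‖x‖² + p b(p)‖x‖ + p c(p)`,
with `a(p) = c₃(2L₁L_F + pL₁²)`, `b(p) = 2c₃L₂(pL₁ + L_F)`, `c(p) = c₃ p L₂²`. -/
theorem lyapunov_perturbation_estimate {n : ℕ}
    (F δ' : (Fin n → ℝ) → (Fin n → ℝ)) (V : (Fin n → ℝ) → ℝ)
    (c₃ c₄ LF L₁ L₂ r₀ p : ℝ)
    (hc₃ : 0 < c₃) (hc₄ : 0 < c₄) (hLF : 0 < LF)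
    (hL₁ : 0 ≤ L₁) (hL₂ : 0 ≤ L₂) (hr₀ : 0 ≤ r₀) (hp : 0 ≤ p)
    (hV₂ : ∀ x₁ x₂, |V x₁ - V x₂| ≤ c₃ * ‖x₁ - x₂‖ * (‖x₁‖ + ‖x₂‖))
    (hV₃ : ∀ x, r₀ ≤ ‖x‖ → V (F x) - V x ≤ -c₄ * ‖x‖ ^ 2)
    (hFsub : ∀ x, ‖F x‖ ≤ LF * ‖x‖)
    (hδ : ∀ x, ‖δ' x‖ ≤ L₁ * ‖x‖ + L₂) :
    ∀ x : Fin n → ℝ, r₀ ≤ ‖x‖ →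
      V (F x + p • δ' x) - V x ≤
        (-c₄ + p * (c₃ * (2 * L₁ * LF + p * L₁ ^ 2))) * ‖x‖ ^ 2
        + p * (2 * c₃ * L₂ * (p * L₁ + LF)) * ‖x‖
        + p * (c₃ * p * L₂ ^ 2) := by
  intro x hx
  have hx0 : (0:ℝ) ≤ ‖x‖ := norm_nonneg x
  have h1' : V (F x + p • δ' x) - V (F x) ≤
      c₃ * ‖p • δ' x‖ * (‖F x + p • δ' x‖ + ‖F x‖) := by
    have := (abs_le.mp (hV₂ (F x + p • δ' x) (F x))).2
    simpa [add_sub_cancel_left] using this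
  have hδn : ‖p • δ' x‖ ≤ p * (L₁ * ‖x‖ + L₂) := by
    rw [norm_smul, Real.norm_eq_abs, abs_of_nonneg hp]
    exact mul_le_mul_of_nonneg_left (hδ x) hp
  have hδ0 : (0:ℝ) ≤ L₁ * ‖x‖ + L₂ := by positivity
  have hsum : ‖F x + p • δ' x‖ + ‖F x‖ ≤ 2 * (LF * ‖x‖) + p * (L₁ * ‖x‖ + L₂) := by
    have := norm_add_le (F x) (p • δ' x)
    have hF := hFsub x
    nlinarith [hδn]
  have hkey : c₃ * ‖p • δ' x‖ * (‖F x + p • δ' x‖ + ‖F x‖) ≤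
      c₃ * (p * (L₁ * ‖x‖ + L₂)) * (2 * (LF * ‖x‖) + p * (L₁ * ‖x‖ + L₂)) := by
    have h0 : (0:ℝ) ≤ ‖p • δ' x‖ := norm_nonneg _
    have h2 : (0:ℝ) ≤ ‖F x + p • δ' x‖ + ‖F x‖ := by positivity
    nlinarith [hδn, hsum, mul_le_mul hδn hsum h2 (by positivity : (0:ℝ) ≤ p * (L₁ * ‖x‖ + L₂))]
  have h3 := hV₃ x hx
  nlinarith [h1', hkey, h3, hc₃.le]
end

section
/- Fix N ≥ 2, δ > 0 and for each i = 1,…,N constants αᵢ, βᵢ > 0 and reference values rᵢ* ∈ (0, αᵢβᵢ/δ) satisfying Σ_{j≠i} δrⱼ*/(αⱼβⱼ − δrⱼ*) < 1 − ϑ for all i, for some ϑ ∈ (0,1). Suppose functions ηᵢ : ℝ≥0 → ℝ satisfy 0 < ηᵢ(w) ≤ ηᵢ* + kᵢεᵢ for all w ≥ 0, where ηᵢ* = δrᵢ*/(αᵢβᵢ − δrᵢ*), kᵢ ≥ 0, and the εᵢ > 0 are small enough that Σ_{j≠i}(ηⱼ* + kⱼεⱼ) ≤ 1 − ϑ for all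 i. Then the discrete-time system wᵢ(k+1) = Σ_{j≠i} ηⱼ(wⱼ(k))(1 + wⱼ(k)), with wᵢ(0) ≥ 0, satisfies: V(k) := max_i wᵢ(k)² obeys V(k+1) − V(k) ≤ −(ϑ/2)V(k) whenever max_i wᵢ(k) ≥ w* := max(1, 6(1−ϑ)/ϑ). Consequently every trajectory is ultimately bounded in [0, w*]^N. -/
/-!
Since the weights `ηⱼ` sum to at most `1 - ϑ` over `j ≠ i`, the sup norm of the iterates obeys
`‖w (k+1)‖ ≤ (1 - ϑ) (1 + ‖w k‖)`. Once `‖w k‖ ≥ 6 (1 - ϑ) / ϑ` this affine bound is a contraction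
by the factor `1 - 5ϑ/6`, whose square is at most `1 - ϑ/2`. Above `w*` the norm therefore drops
by a fixed amount per step, so it eventually falls below `w*`, and the affine bound keeps it there.
-/

open Finset

section CompetitionStep

variable {ι : Type*} [Fintype ι] [DecidableEq ι]

def competitionStep (η : ι → ℝ → ℝ) (v : ι → ℝ) (i : ι) : ℝ :=
  ∑ j ∈ univ.erase i, η j (v j) * (1 + v j)

variable {η : ι → ℝ → ℝ} {v : ι → ℝ}

lemma competitionStep_nonneg (hη : ∀ j x, 0 ≤ x → 0 ≤ η j x) (hv : 0 ≤ v) :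
    0 ≤ competitionStep η v := fun _ =>
  sum_nonneg fun j _ => mul_nonneg (hη j (v j) (hv j)) (add_nonneg zero_le_one (hv j))

lemma norm_competitionStep_le {B : ι → ℝ} {c : ℝ} (hc : 0 ≤ c)
    (hη : ∀ j x, 0 ≤ x → 0 ≤ η j x ∧ η j x ≤ B j) (hB : ∀ i, ∑ j ∈ univ.erase i, B j ≤ c)
    (hv : 0 ≤ v) : ‖competitionStep η v‖ ≤ c * (1 + ‖v‖) := by
  have hv_le (j : ι) : v j ≤ ‖v‖ := (Real.le_norm_self _).trans (norm_le_pi_norm v j)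
  refine (pi_norm_le_iff_of_nonneg (by positivity)).2 fun i => ?_
  rw [Real.norm_of_nonneg (competitionStep_nonneg (fun j x hx => (hη j x hx).1) hv i)]
  calc competitionStep η v i
      ≤ ∑ j ∈ univ.erase i, B j * (1 + ‖v‖) := by
        refine sum_le_sum fun j _ => ?_
        obtain ⟨hη0, hηB⟩ := hη j (v j) (hv j)
        exact mul_le_mul hηB (by linarith [hv_le j]) (add_nonneg zero_le_one (hv j)) (hη0.trans hηB)
    _ = (∑ j ∈ univ.erase i, B j) * (1 + ‖v‖) := (sum_mul _ _ _).symm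
    _ ≤ c * (1 + ‖v‖) := mul_le_mul_of_nonneg_right (hB i) (by positivity)

end CompetitionStep

section AffineBound

variable {ϑ a b : ℝ}

lemma le_one_sub_mul_of_le_mul_one_add (hϑ : 0 < ϑ) (ha : 6 * (1 - ϑ) / ϑ ≤ a)
    (hb : b ≤ (1 - ϑ) * (1 + a)) : b ≤ (1 - 5 * ϑ / 6) * a := by
  have : 6 * (1 - ϑ) ≤ a * ϑ := (div_le_iff₀ hϑ).1 ha
  linarith

lemma sq_sub_sq_le_of_le_one_sub_mul (hϑ : ϑ ∈ Set.Icc (0 : ℝ) 1) (hb0 : 0 ≤ b)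
    (hb : b ≤ (1 - 5 * ϑ / 6) * a) : b ^ 2 - a ^ 2 ≤ -(ϑ / 2) * a ^ 2 := by
  obtain ⟨hϑ0, hϑ1⟩ := hϑ
  have hsq : b ^ 2 ≤ ((1 - 5 * ϑ / 6) * a) ^ 2 := pow_le_pow_left₀ hb0 hb 2
  nlinarith [mul_nonneg (by nlinarith : (0 : ℝ) ≤ 7 * ϑ / 6 - 25 * ϑ ^ 2 / 36) (sq_nonneg a)]

lemma le_of_le_mul_one_add {W : ℝ} (hϑ : ϑ ≤ 1) (hW : 1 - ϑ ≤ ϑ * W) (ha : a ≤ W)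
    (hb : b ≤ (1 - ϑ) * (1 + a)) : b ≤ W := by
  nlinarith [mul_le_mul_of_nonneg_left ha (by linarith : (0 : ℝ) ≤ 1 - ϑ)]

end AffineBound

/-- While `u n ≥ W`, the contraction lowers `u` by at least `(1 - q) W`. -/
lemma exists_lt_of_le_mul_of_ge {u : ℕ → ℝ} {q W : ℝ} (hq : q < 1) (hW : 0 < W)
    (h : ∀ n, W ≤ u n → u (n + 1) ≤ q * u n) : ∃ n, u n < W := by
  by_contra! hge
  have hdrop (n : ℕ) : u n ≤ u 0 - n * ((1 - q) * W) := by
    induction n with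
    | zero => simp
    | succ n ih =>
      push_cast
      nlinarith [h n (hge n), mul_nonneg (by linarith : (0 : ℝ) ≤ 1 - q) (sub_nonneg.2 (hge n))]
  obtain ⟨n, hn⟩ := exists_nat_gt ((u 0 - W) / ((1 - q) * W))
  have hn' : u 0 - W < n * ((1 - q) * W) := (div_lt_iff₀ (by nlinarith)).1 hn
  linarith [hdrop n, hge n]

theorem resource_competition_ultimate_boundedness_general
    (N : ℕ) (δ ϑ : ℝ) (hϑ : ϑ ∈ Set.Ioo (0:ℝ) 1)
    (α β rstar kconst ε : Fin N → ℝ) (η : Fin N → ℝ → ℝ)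
    (hsum : ∀ i, ∑ j ∈ Finset.univ.erase i,
        (δ * rstar j / (α j * β j - δ * rstar j) + kconst j * ε j) ≤ 1 - ϑ)
    (hη : ∀ i w, 0 ≤ w →
        0 < η i w ∧
        η i w ≤ δ * rstar i / (α i * β i - δ * rstar i) + kconst i * ε i)
    (w : ℕ → Fin N → ℝ) (hw0 : ∀ i, 0 ≤ w 0 i)
    (hiter : ∀ k i, w (k + 1) i =
        ∑ j ∈ Finset.univ.erase i, η j (w k j) * (1 + w k j)) :
    let wstarbd : ℝ := max 1 (6 * (1 - ϑ) / ϑ)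
    (∀ k, wstarbd ≤ ‖w k‖ →
      ‖w (k + 1)‖ ^ 2 - ‖w k‖ ^ 2 ≤ -(ϑ / 2) * ‖w k‖ ^ 2) ∧
    (∃ kstar : ℕ, ∀ k ≥ kstar, ∀ i, w k i ∈ Set.Icc 0 wstarbd) := by
  obtain ⟨hϑ0, hϑ1⟩ := hϑ
  intro W
  have hη' j x (hx : 0 ≤ x) := And.intro (hη j x hx).1.le (hη j x hx).2
  have hw_succ (k : ℕ) : w (k + 1) = competitionStep η (w k) := funext (hiter k)
  have hw_nonneg (k : ℕ) : 0 ≤ w k := by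
    induction k with
    | zero => exact hw0
    | succ k ih => rw [hw_succ]; exact competitionStep_nonneg (fun j x hx => (hη' j x hx).1) ih
  have hstep (k : ℕ) : ‖w (k + 1)‖ ≤ (1 - ϑ) * (1 + ‖w k‖) := by
    rw [hw_succ]; exact norm_competitionStep_le (by linarith) hη' hsum (hw_nonneg k)
  have hW : 6 * (1 - ϑ) / ϑ ≤ W := le_max_right _ _
  have hcontr (k : ℕ) (hk : W ≤ ‖w k‖) : ‖w (k + 1)‖ ≤ (1 - 5 * ϑ / 6) * ‖w k‖ :=
    le_one_sub_mul_of_le_mul_one_add hϑ0 (hW.trans hk) (hstep k)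
  refine ⟨fun k hk => sq_sub_sq_le_of_le_one_sub_mul ⟨hϑ0.le, hϑ1.le⟩ (norm_nonneg _)
    (hcontr k hk), ?_⟩
  obtain ⟨k₀, hk₀⟩ := exists_lt_of_le_mul_of_ge (by linarith) (by positivity) hcontr
  have hW' : 1 - ϑ ≤ ϑ * W := by nlinarith [(div_le_iff₀ hϑ0).1 hW]
  have hbounded (k : ℕ) (hk : k₀ ≤ k) : ‖w k‖ ≤ W := by
    induction k, hk using Nat.le_induction with
    | base => exact hk₀.le
    | succ k _ ih => exact le_of_le_mul_one_add hϑ1.le hW' ih (hstep k)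
  exact ⟨k₀, fun k hk i => ⟨hw_nonneg k i,
    (Real.le_norm_self _).trans ((norm_le_pi_norm (w k) i).trans (hbounded k hk))⟩⟩

/-- Lyapunov decrease and ultimate boundedness for the
resource-competition fixed-point iteration
`wᵢ(k+1) = Σ_{j≠i} ηⱼ(wⱼ(k))(1 + wⱼ(k))` (Proposition 1). -/
theorem resource_competition_ultimate_boundedness
    (N : ℕ) (hN : 2 ≤ N) (δ ϑ : ℝ) (hδ : 0 < δ) (hϑ : ϑ ∈ Set.Ioo (0:ℝ) 1)
    (α β rstar kconst ε : Fin N → ℝ) (η : Fin N → ℝ → ℝ)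
    (hα : ∀ i, 0 < α i) (hβ : ∀ i, 0 < β i)
    (hrs : ∀ i, rstar i ∈ Set.Ioo 0 (α i * β i / δ))
    (hkc : ∀ i, 0 ≤ kconst i) (hε : ∀ i, 0 < ε i)
    (hsum₀ : ∀ i, ∑ j ∈ Finset.univ.erase i,
        δ * rstar j / (α j * β j - δ * rstar j) < 1 - ϑ)
    (hsum : ∀ i, ∑ j ∈ Finset.univ.erase i,
        (δ * rstar j / (α j * β j - δ * rstar j) + kconst j * ε j) ≤ 1 - ϑ)
    (hη : ∀ i w, 0 ≤ w →
        0 < η i w ∧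
        η i w ≤ δ * rstar i / (α i * β i - δ * rstar i) + kconst i * ε i)
    (w : ℕ → Fin N → ℝ) (hw0 : ∀ i, 0 ≤ w 0 i)
    (hiter : ∀ k i, w (k + 1) i =
        ∑ j ∈ Finset.univ.erase i, η j (w k j) * (1 + w k j)) :
    let wstarbd : ℝ := max 1 (6 * (1 - ϑ) / ϑ)
    (∀ k, wstarbd ≤ ‖w k‖ →
      ‖w (k + 1)‖ ^ 2 - ‖w k‖ ^ 2 ≤ -(ϑ / 2) * ‖w k‖ ^ 2) ∧
    (∃ kstar : ℕ, ∀ k ≥ kstar, ∀ i, w k i ∈ Set.Icc 0 wstarbd) :=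
  resource_competition_ultimate_boundedness_general N δ ϑ hϑ α β rstar kconst ε η hsum hη w hw0
    hiter
end
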